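/- Fix 0 < γ < 1/2 and an integer N ≥ 0. Define φ_γ(N) = Σ_{j=0}^N (2γ)^j = (1-(2γ)^{N+1})/(1-2γ). On the complete binary tree of depth N with node set U_N = ∪_{k=0}^N {0,1}^k and tree distance D(u,w) = |u| + |w| - 2|a(u,w)| (a(u,w) the most recent common ancestor), for every node u with |u| = k we have Σ_{w ∈ U_N} γ^{D(u,w)} ≤ φ_γ(N) + Σ_{i=1}^{k} (γ^i + γ^{i+1} φ_γ(N-1)), and consequently Σ_{u,w ∈ U_N} γ^{D(u,w)} ≤ C(γ) · 2^N for a constant C(γ) depending only on γ. -/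
import Mathlib


open Finset

/-- Length of the longest common prefix of two nodes of the binary tree
(coded as lists of booleans), i.e. the generation of the most recent common ancestor. -/
def lcpLen : List Bool → List Bool → ℕ
  | a :: as, b :: bs => if a = b then lcpLen as bs + 1 else 0
  | _, _ => 0

/-- Tree distance `D(u,w) = |u| + |w| - 2 |a(u,w)|`. -/
def treeDist (u w : List Bool) : ℕ := u.length + w.length - 2 * lcpLen u w

/-- The complete binary tree of depth `N`: all nodes of generation at most `N`. -/
def fullTree (N : ℕ) : Finset (List Bool) :=
  (Finset.range (N + 1)).biUnion fun k =>
    Finset.image (fun f : Fin k → Bool => List.ofFn f) Finset.univ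

/-- `φ_γ(N) = Σ_{j=0}^N (2γ)^j = (1-(2γ)^{N+1})/(1-2γ)`. -/
noncomputable def phiGamma (γ : ℝ) (N : ℕ) : ℝ := (1 - (2 * γ) ^ (N + 1)) / (1 - 2 * γ)

lemma lcpLen_le : ∀ u w : List Bool, lcpLen u w ≤ u.length ∧ lcpLen u w ≤ w.length := by
  intro u
  induction u with
  | nil => intro w; cases w <;> simp [lcpLen]
  | cons a as ih =>
    intro w
    cases w with
    | nil => simp [lcpLen]
    | cons b bs =>
      by_cases h : a = b <;> simp only [lcpLen, h, if_true, if_false, List.length_cons]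
      · exact ⟨Nat.succ_le_succ (ih bs).1, Nat.succ_le_succ (ih bs).2⟩
      · simp [h]

lemma mem_fullTree {N : ℕ} {w : List Bool} : w ∈ fullTree N ↔ w.length ≤ N := by
  simp only [fullTree, mem_biUnion, mem_range, mem_image, mem_univ, true_and]
  constructor
  · rintro ⟨k, hk, f, rfl⟩; simp; omega
  · intro h
    exact ⟨w.length, by omega, w.get, by simp⟩

lemma sum_fullTree_succ (N : ℕ) (f : List Bool → ℝ) :
    ∑ w ∈ fullTree (N + 1), f w
      = f [] + ((∑ w ∈ fullTree N, f (true :: w)) + ∑ w ∈ fullTree N, f (false :: w)) := by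
  have h1 : fullTree (N + 1)
      = insert [] ((fullTree N).image (List.cons true) ∪ (fullTree N).image (List.cons false)) := by
    ext w
    cases w with
    | nil => simp [mem_fullTree]
    | cons b bs => cases b <;> simp [mem_fullTree] <;> omega
  have hd : Disjoint ((fullTree N).image (List.cons true)) ((fullTree N).image (List.cons false)) := by
    rw [Finset.disjoint_left]
    rintro a ha hb
    simp only [mem_image] at ha hb
    obtain ⟨x, _, rfl⟩ := ha
    obtain ⟨y, _, h⟩ := hb
    simp at h
  rw [h1, Finset.sum_insert (by simp), Finset.sum_union hd,
    Finset.sum_image (by intro x _ y _ h; simpa using h),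
    Finset.sum_image (by intro x _ y _ h; simpa using h)]

lemma phiGamma_eq_sum (γ : ℝ) (hγ : 2 * γ ≠ 1) (N : ℕ) :
    phiGamma γ N = ∑ j ∈ range (N + 1), (2 * γ) ^ j := by
  rw [geom_sum_eq hγ, phiGamma]
  rw [show (1 : ℝ) - (2*γ)^(N+1) = -((2*γ)^(N+1) - 1) by ring,
    show (1 : ℝ) - 2*γ = -(2*γ - 1) by ring, neg_div_neg_eq]

lemma sum_pow_length (γ : ℝ) (hγ : 2 * γ ≠ 1) :
    ∀ N : ℕ, ∑ w ∈ fullTree N, γ ^ w.length = phiGamma γ N := by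
  intro N
  induction N with
  | zero =>
    have : fullTree 0 = {[]} := by
      ext w; simp [mem_fullTree, List.length_eq_zero_iff]
    rw [this, phiGamma_eq_sum γ hγ]; simp
  | succ M ih =>
    have hc : ∀ c : Bool, (∑ w ∈ fullTree M, γ ^ (c :: w).length)
        = γ * ∑ w ∈ fullTree M, γ ^ w.length := by
      intro c
      rw [Finset.mul_sum]
      exact Finset.sum_congr rfl fun w _ => by rw [List.length_cons, pow_succ]; ring
    have hrec : phiGamma γ (M + 1) = 1 + 2 * γ * phiGamma γ M := by
      have hg := geom_sum_succ (x := 2 * γ) (n := M + 1)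
      rw [phiGamma_eq_sum γ hγ (M + 1), phiGamma_eq_sum γ hγ M, hg]
      ring
    rw [sum_fullTree_succ M (fun w => γ ^ w.length), hc, hc, ih, hrec]
    simp only [List.length_nil, pow_zero]
    ring

lemma phiGamma_nonneg (γ : ℝ) (hγ0 : 0 ≤ γ) (hγ : 2 * γ < 1) (N : ℕ) :
    0 ≤ phiGamma γ N := by
  rw [phiGamma_eq_sum γ hγ.ne N]
  exact Finset.sum_nonneg fun i _ => pow_nonneg (by linarith) i

lemma phiGamma_mono (γ : ℝ) (hγ0 : 0 ≤ γ) (hγ : 2 * γ < 1) {M N : ℕ} (h : M ≤ N) :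
    phiGamma γ M ≤ phiGamma γ N := by
  rw [phiGamma_eq_sum γ hγ.ne M, phiGamma_eq_sum γ hγ.ne N]
  apply Finset.sum_le_sum_of_subset_of_nonneg
  · exact Finset.range_subset_range.2 (by omega)
  · intro i _ _; exact pow_nonneg (by linarith) i

lemma phiGamma_le (γ : ℝ) (hγ0 : 0 ≤ γ) (hγ : 2 * γ < 1) (N : ℕ) :
    phiGamma γ N ≤ 1 / (1 - 2 * γ) := by
  have h1 : (0:ℝ) < 1 - 2 * γ := by linarith
  have h2 : (1:ℝ) - (2 * γ) ^ (N + 1) ≤ 1 := by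
    nlinarith [pow_nonneg (by linarith : (0:ℝ) ≤ 2 * γ) (N + 1)]
  rw [phiGamma]
  exact (div_le_div_iff_of_pos_right h1).mpr h2

lemma treeDist_nil_right (u : List Bool) : treeDist u [] = u.length := by
  cases u <;> simp [treeDist, lcpLen]

lemma treeDist_nil_left (w : List Bool) : treeDist [] w = w.length := by
  cases w <;> simp [treeDist, lcpLen]

lemma treeDist_cons_same (b : Bool) (u w : List Bool) :
    treeDist (b :: u) (b :: w) = treeDist u w := by
  have h1 := (lcpLen_le u w).1
  have h2 := (lcpLen_le u w).2
  simp only [treeDist, lcpLen, if_true, List.length_cons]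
  omega

lemma treeDist_cons_ne (b c : Bool) (u w : List Bool) (h : b ≠ c) :
    treeDist (b :: u) (c :: w) = u.length + w.length + 2 := by
  simp only [treeDist, lcpLen, h, if_false, List.length_cons]
  omega

lemma main_bound (γ : ℝ) (hγ0 : 0 < γ) (hγ : γ < 1 / 2) :
    ∀ u : List Bool, ∀ N : ℕ, u.length ≤ N →
    ∑ w ∈ fullTree N, γ ^ treeDist u w
      ≤ phiGamma γ N + ∑ i ∈ Finset.Icc 1 u.length, (γ ^ i + γ ^ (i + 1) * phiGamma γ (N - 1)) := by
  have hx : 2 * γ < 1 := by linarith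
  intro u
  induction u with
  | nil =>
    intro N _
    have h1 : ∑ w ∈ fullTree N, γ ^ treeDist [] w = phiGamma γ N := by
      rw [← sum_pow_length γ hx.ne N]
      exact Finset.sum_congr rfl fun w _ => by rw [treeDist_nil_left]
    simp [h1]
  | cons b bs ih =>
    intro N hN
    obtain ⟨M, rfl⟩ : ∃ M, N = M + 1 := ⟨N - 1, by simp at hN; omega⟩
    have hbs : bs.length ≤ M := by simp at hN; omega
    have key : ∑ w ∈ fullTree (M + 1), γ ^ treeDist (b :: bs) w
        = γ ^ (bs.length + 1)
          + ((∑ w ∈ fullTree M, γ ^ treeDist bs w)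
            + γ ^ (bs.length + 2) * phiGamma γ M) := by
      rw [sum_fullTree_succ (M) (fun w => γ ^ treeDist (b :: bs) w), treeDist_nil_right]
      have hne : ∀ c : Bool, c ≠ b →
          ∑ w ∈ fullTree M, γ ^ treeDist (b :: bs) (c :: w)
            = γ ^ (bs.length + 2) * phiGamma γ M := by
        intro c hc
        rw [← sum_pow_length γ hx.ne M, Finset.mul_sum]
        refine Finset.sum_congr rfl fun w _ => ?_
        rw [treeDist_cons_ne b c bs w (Ne.symm hc), ← pow_add]
        ring_nf
      have hsame : ∑ w ∈ fullTree M, γ ^ treeDist (b :: bs) (b :: w)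
          = ∑ w ∈ fullTree M, γ ^ treeDist bs w :=
        Finset.sum_congr rfl fun w _ => by rw [treeDist_cons_same]
      cases b
      · rw [hne true (by simp), hsame]
        try simp only [List.length_cons]
        try ring
      · rw [hne false (by simp), hsame]
        try simp only [List.length_cons]
        try ring
    rw [key, List.length_cons]
    have hIH := ih M hbs
    have hmono1 : phiGamma γ M ≤ phiGamma γ (M + 1) :=
      phiGamma_mono γ hγ0.le hx (by omega)
    have hmono2 : phiGamma γ (M - 1) ≤ phiGamma γ M :=
      phiGamma_mono γ hγ0.le hx (by omega)
    have hsum : ∑ i ∈ Finset.Icc 1 bs.length, (γ ^ i + γ ^ (i + 1) * phiGamma γ (M - 1))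
        ≤ ∑ i ∈ Finset.Icc 1 bs.length, (γ ^ i + γ ^ (i + 1) * phiGamma γ M) := by
      refine Finset.sum_le_sum fun i _ => ?_
      have : γ ^ (i + 1) * phiGamma γ (M - 1) ≤ γ ^ (i + 1) * phiGamma γ M :=
        mul_le_mul_of_nonneg_left hmono2 (pow_nonneg hγ0.le _)
      linarith
    have hsplit : ∑ i ∈ Finset.Icc 1 (bs.length + 1), (γ ^ i + γ ^ (i + 1) * phiGamma γ (M + 1 - 1))
        = (∑ i ∈ Finset.Icc 1 bs.length, (γ ^ i + γ ^ (i + 1) * phiGamma γ M))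
          + (γ ^ (bs.length + 1) + γ ^ (bs.length + 2) * phiGamma γ M) := by
      rw [show M + 1 - 1 = M from rfl, Finset.sum_Icc_succ_top (by omega)]
    rw [hsplit]
    have := hIH.trans (by linarith : phiGamma γ M + ∑ i ∈ Finset.Icc 1 bs.length, (γ ^ i + γ ^ (i + 1) * phiGamma γ (M - 1)) ≤ phiGamma γ (M + 1) + ∑ i ∈ Finset.Icc 1 bs.length, (γ ^ i + γ ^ (i + 1) * phiGamma γ M))
    linarith

lemma two_pow_sum : ∀ n : ℕ, (∑ k ∈ range n, 2 ^ k) + 1 = 2 ^ n := by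
  intro n
  induction n with
  | zero => simp
  | succ m ih => rw [Finset.sum_range_succ, pow_succ]; omega

lemma card_fullTree_le (N : ℕ) : (fullTree N).card ≤ 2 ^ (N + 1) := by
  calc (fullTree N).card
      ≤ ∑ k ∈ range (N + 1),
          (Finset.image (fun f : Fin k → Bool => List.ofFn f) Finset.univ).card :=
        Finset.card_biUnion_le
    _ ≤ ∑ k ∈ range (N + 1), 2 ^ k := by
        refine Finset.sum_le_sum fun k _ => ?_
        calc (Finset.image (fun f : Fin k → Bool => List.ofFn f) Finset.univ).card
            ≤ (Finset.univ : Finset (Fin k → Bool)).card := Finset.card_image_le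
          _ = 2 ^ k := by simp
    _ ≤ 2 ^ (N + 1) := by have := two_pow_sum (N + 1); omega

lemma geom_sum_le_aux (γ : ℝ) (hγ0 : 0 ≤ γ) (hγ : γ < 1) (n : ℕ) :
    ∑ i ∈ range n, γ ^ i ≤ 1 / (1 - γ) := by
  rw [geom_sum_eq (by linarith : γ ≠ 1),
    show γ ^ n - 1 = -(1 - γ ^ n) by ring, show γ - 1 = -(1 - γ) by ring, neg_div_neg_eq]
  have h1 : (0:ℝ) < 1 - γ := by linarith
  exact (div_le_div_iff_of_pos_right h1).mpr (by nlinarith [pow_nonneg hγ0 n])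

/-- Correlation sums over the full binary genealogical tree, for `0 < γ < 1/2`. -/
theorem full_tree_correlation_sum (γ : ℝ) (hγ0 : 0 < γ) (hγ : γ < 1 / 2) :
    (∀ N : ℕ, ∀ u ∈ fullTree N,
      (∑ w ∈ fullTree N, γ ^ treeDist u w)
        ≤ phiGamma γ N +
            ∑ i ∈ Finset.Icc 1 u.length, (γ ^ i + γ ^ (i + 1) * phiGamma γ (N - 1))) ∧
    ∃ C : ℝ, 0 < C ∧ ∀ N : ℕ,
      (∑ u ∈ fullTree N, ∑ w ∈ fullTree N, γ ^ treeDist u w) ≤ C * 2 ^ N := by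
  have hx : 2 * γ < 1 := by linarith
  have hpart1 : ∀ N : ℕ, ∀ u ∈ fullTree N,
      (∑ w ∈ fullTree N, γ ^ treeDist u w)
        ≤ phiGamma γ N +
            ∑ i ∈ Finset.Icc 1 u.length, (γ ^ i + γ ^ (i + 1) * phiGamma γ (N - 1)) :=
    fun N u hu => main_bound γ hγ0 hγ u N (mem_fullTree.1 hu)
  refine ⟨hpart1, ?_⟩
  set K : ℝ := 1 / (1 - 2 * γ) with hKdef
  have hK0 : 0 < K := by
    rw [hKdef]
    have : (0:ℝ) < 1 - 2 * γ := by linarith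
    positivity
  set L : ℝ := 1 / (1 - γ) with hLdef
  have hL0 : 0 < L := by
    rw [hLdef]
    have : (0:ℝ) < 1 - γ := by linarith
    positivity
  set C0 : ℝ := K + (1 + γ * K) * L with hC0def
  have hC00 : 0 < C0 := by
    have : 0 ≤ (1 + γ * K) * L := by positivity
    rw [hC0def]; linarith
  refine ⟨2 * C0, by linarith, fun N => ?_⟩
  have hub : ∀ u ∈ fullTree N, ∑ w ∈ fullTree N, γ ^ treeDist u w ≤ C0 := by
    intro u hu
    refine (hpart1 N u hu).trans ?_
    have h1 : phiGamma γ N ≤ K := phiGamma_le γ hγ0.le hx N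
    have h2 : ∑ i ∈ Finset.Icc 1 u.length, (γ ^ i + γ ^ (i + 1) * phiGamma γ (N - 1))
        ≤ (1 + γ * K) * L := by
      have step1 : ∑ i ∈ Finset.Icc 1 u.length, (γ ^ i + γ ^ (i + 1) * phiGamma γ (N - 1))
          ≤ ∑ i ∈ Finset.Icc 1 u.length, γ ^ i * (1 + γ * K) := by
        refine Finset.sum_le_sum fun i _ => ?_
        have hp1 := phiGamma_le γ hγ0.le hx (N - 1)
        have hp2 := phiGamma_nonneg γ hγ0.le hx (N - 1)
        have hpow : (0:ℝ) ≤ γ ^ i := pow_nonneg hγ0.le i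
        have he : γ ^ (i + 1) = γ ^ i * γ := pow_succ γ i
        nlinarith [mul_le_mul_of_nonneg_left hp1 (pow_nonneg hγ0.le (i + 1))]
      have step2 : ∑ i ∈ Finset.Icc 1 u.length, γ ^ i ≤ L := by
        have hsub : Finset.Icc 1 u.length ⊆ range (u.length + 1) := by
          intro i hi; simp only [Finset.mem_Icc] at hi; simp; omega
        calc ∑ i ∈ Finset.Icc 1 u.length, γ ^ i
            ≤ ∑ i ∈ range (u.length + 1), γ ^ i :=
              Finset.sum_le_sum_of_subset_of_nonneg hsub
                (fun i _ _ => pow_nonneg hγ0.le i)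
          _ ≤ L := geom_sum_le_aux γ hγ0.le (by linarith) (u.length + 1)
      calc ∑ i ∈ Finset.Icc 1 u.length, (γ ^ i + γ ^ (i + 1) * phiGamma γ (N - 1))
          ≤ ∑ i ∈ Finset.Icc 1 u.length, γ ^ i * (1 + γ * K) := step1
        _ = (∑ i ∈ Finset.Icc 1 u.length, γ ^ i) * (1 + γ * K) := by
            rw [Finset.sum_mul]
        _ ≤ L * (1 + γ * K) := by
            have h1K : (0:ℝ) ≤ 1 + γ * K := by nlinarith
            exact mul_le_mul_of_nonneg_right step2 h1K
        _ = (1 + γ * K) * L := mul_comm _ _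
    rw [hC0def]; linarith
  have hcard : ((fullTree N).card : ℝ) ≤ 2 ^ (N + 1) := by
    have := card_fullTree_le N
    calc ((fullTree N).card : ℝ) ≤ ((2 ^ (N + 1) : ℕ) : ℝ) := by exact_mod_cast this
      _ = 2 ^ (N + 1) := by push_cast; ring
  calc ∑ u ∈ fullTree N, ∑ w ∈ fullTree N, γ ^ treeDist u w
      ≤ ∑ _u ∈ fullTree N, C0 := Finset.sum_le_sum hub
    _ = ((fullTree N).card : ℝ) * C0 := by rw [Finset.sum_const, nsmul_eq_mul]
    _ ≤ 2 ^ (N + 1) * C0 := mul_le_mul_of_nonneg_right hcard hC00.le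
    _ = 2 * C0 * 2 ^ N := by ring
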